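/- Let U be an ℓ×ℓ complex unitary matrix with spectral decomposition U = Σ_{r=1}^m λ_r F_r, and let ε > 0. Then for every integer K with K ≥ (2ℓ/ε) Σ_{r ≠ s} 1/|λ_r − λ_s|, and every unit vector x ∈ ℂ^ℓ, one has Σ_{j=1}^ℓ | (1/K) Σ_{k=0}^{K-1} x* (U^k)* D_j U^k x − Σ_{r=1}^m x* F_r D_j F_r x | ≤ ε. -/

import Mathlib

/-!
Write `y r := F r *ᵥ x`. Since `U ^ k = ∑ r, λ_r ^ k • F r`, the quadratic form
`x* (U^k)* D_j U^k x = |(U^k x)_j|²` equals `∑ r s, (conj λ_r λ_s)^k conj (y r j) (y s j)`.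
Averaging over `k < K` leaves the diagonal terms `r = s` untouched, and they sum to the limit
`∑ r, x* F_r D_j F_r x`; for `r ≠ s` the average of the powers of `μ = conj λ_r λ_s ≠ 1` has
modulus at most `2 / (K |μ - 1|) = 2 / (K |λ_r - λ_s|)`. As `F_r` is an orthogonal projection,
`|y r j| ≤ ‖x‖ = 1`, so every coordinate `j` deviates by at most
`(2 / K) ∑_{r ≠ s} 1 / |λ_r - λ_s|`.
-/

open Matrix Finset

lemma CompleteOrthogonalIdempotents.sum_smul_pow {ι R A : Type*} [Fintype ι] [CommSemiring R]
    [Semiring A] [Algebra R A] {e : ι → A} (he : CompleteOrthogonalIdempotents e) (c : ι → R)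
    (k : ℕ) : (∑ i, c i • e i) ^ k = ∑ i, c i ^ k • e i := by
  classical
  induction k with
  | zero => simpa using he.complete.symm
  | succ k ih =>
    rw [pow_succ, ih, sum_mul_sum]
    simp only [smul_mul_smul_comm, he.mul_eq, smul_ite, smul_zero, sum_ite_eq, mem_univ,
      if_true, pow_succ]

section QuadraticForm

variable {ι n R : Type*} [Fintype ι] [Fintype n] [DecidableEq n] [CommSemiring R] [StarRing R]

lemma star_dotProduct_conjTranspose_mul_single_mul_mulVec (M : Matrix n n R) (j : n)
    (x : n → R) :
    star x ⬝ᵥ ((Mᴴ * single j j 1 * M) *ᵥ x) = star ((M *ᵥ x) j) * (M *ᵥ x) j := by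
  rw [Matrix.mul_assoc, ← mulVec_mulVec, ← mulVec_mulVec, dotProduct_mulVec, ← star_mulVec,
    single_mulVec_eq]
  simp [mul_comm]

lemma star_dotProduct_pow_conjTranspose_mul_single_mul_pow_mulVec
    {F : ι → Matrix n n R} (hF : CompleteOrthogonalIdempotents F) (c : ι → R) (k : ℕ) (j : n)
    (x : n → R) :
    star x ⬝ᵥ ((((∑ r, c r • F r) ^ k)ᴴ * single j j 1 * (∑ r, c r • F r) ^ k) *ᵥ x) =
      ∑ r, ∑ s, (star (c r) * c s) ^ k * (star ((F r *ᵥ x) j) * (F s *ᵥ x) j) := by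
  rw [star_dotProduct_conjTranspose_mul_single_mul_mulVec, hF.sum_smul_pow, sum_mulVec]
  simp only [smul_mulVec, Finset.sum_apply, Pi.smul_apply, smul_eq_mul, star_sum, sum_mul_sum,
    star_mul', star_pow]
  refine sum_congr rfl fun r _ => sum_congr rfl fun s _ => ?_
  ring

end QuadraticForm

section Projection

variable {n R : Type*} [Fintype n] [CommRing R] [StarRing R]

lemma IsStarProjection.star_mulVec_dotProduct_mulVec {P : Matrix n n R} (hP : IsStarProjection P)
    (x : n → R) : star (P *ᵥ x) ⬝ᵥ (P *ᵥ x) = star x ⬝ᵥ (P *ᵥ x) := by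
  rw [star_mulVec, ← dotProduct_mulVec, mulVec_mulVec, ← star_eq_conjTranspose,
    hP.isSelfAdjoint.star_eq, hP.isIdempotentElem.eq]

variable [PartialOrder R] [StarOrderedRing R]

lemma IsStarProjection.star_mulVec_dotProduct_mulVec_le [DecidableEq n] {P : Matrix n n R}
    (hP : IsStarProjection P) (x : n → R) : star (P *ᵥ x) ⬝ᵥ (P *ᵥ x) ≤ star x ⬝ᵥ x := by
  have hsplit : star x ⬝ᵥ x =
      star (P *ᵥ x) ⬝ᵥ (P *ᵥ x) + star ((1 - P) *ᵥ x) ⬝ᵥ ((1 - P) *ᵥ x) := by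
    rw [hP.star_mulVec_dotProduct_mulVec, hP.one_sub.star_mulVec_dotProduct_mulVec,
      ← dotProduct_add, ← add_mulVec, add_sub_cancel, one_mulVec]
  rw [hsplit]
  exact le_add_of_nonneg_right (dotProduct_star_self_nonneg _)

lemma star_mul_self_le_dotProduct_star_self (v : n → R) (j : n) :
    star (v j) * v j ≤ star v ⬝ᵥ v :=
  single_le_sum (f := fun i => star (v i) * v i) (fun _ _ => star_mul_self_nonneg _) (mem_univ j)

end Projection

open scoped ComplexOrder in
lemma IsStarProjection.norm_mulVec_apply_le_one {n 𝕜 : Type*} [Fintype n] [DecidableEq n]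
    [RCLike 𝕜] {P : Matrix n n 𝕜} (hP : IsStarProjection P) {x : n → 𝕜}
    (hx : star x ⬝ᵥ x = 1) (j : n) :
    ‖(P *ᵥ x) j‖ ≤ 1 := by
  have h := (star_mul_self_le_dotProduct_star_self (P *ᵥ x) j).trans
    (hP.star_mulVec_dotProduct_mulVec_le x)
  rw [hx, RCLike.star_def, RCLike.conj_mul] at h
  have : ‖(P *ᵥ x) j‖ ^ 2 ≤ 1 := by exact_mod_cast h
  exact (sq_le_one_iff₀ (norm_nonneg _)).1 this

section PowAverage

variable {𝕜 : Type*}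

def powAverage [DivisionSemiring 𝕜] (K : ℕ) (μ : 𝕜) : 𝕜 := (K : 𝕜)⁻¹ * ∑ k ∈ range K, μ ^ k

lemma powAverage_one [DivisionSemiring 𝕜] [CharZero 𝕜] {K : ℕ} (hK : K ≠ 0) :
    powAverage K (1 : 𝕜) = 1 := by
  simp [powAverage, hK]

lemma norm_powAverage_le [RCLike 𝕜] {μ : 𝕜} (hμ : ‖μ‖ = 1) (hμ1 : μ ≠ 1) (K : ℕ) :
    ‖powAverage K μ‖ ≤ 2 / (K * ‖μ - 1‖) := by
  have hnum : ‖μ ^ K - 1‖ ≤ 2 := by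
    simpa [hμ, one_add_one_eq_two] using norm_sub_le (μ ^ K) 1
  rw [powAverage, geom_sum_eq hμ1, norm_mul, norm_div, norm_inv, RCLike.norm_natCast,
    mul_div_assoc', inv_mul_eq_div, div_div]
  gcongr

lemma sum_sum_powAverage_mul {ι 𝕜 : Type*} [Fintype ι] [DivisionSemiring 𝕜] (K : ℕ)
    (μ b : ι → ι → 𝕜) :
    ∑ r, ∑ s, powAverage K (μ r s) * b r s =
      (K : 𝕜)⁻¹ * ∑ k ∈ range K, ∑ r, ∑ s, μ r s ^ k * b r s := by
  simp only [powAverage, mul_assoc, sum_mul, mul_sum]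
  conv_rhs => rw [sum_comm]; enter [2, r]; rw [sum_comm]

variable [RCLike 𝕜] {a b : 𝕜}

lemma RCLike.star_mul_self_of_norm_eq_one (ha : ‖a‖ = 1) : star a * a = 1 := by
  rw [RCLike.star_def, RCLike.conj_mul, ha]
  simp

lemma powAverage_star_mul_self {K : ℕ} (hK : K ≠ 0) (ha : ‖a‖ = 1) :
    powAverage K (star a * a) = 1 := by
  rw [RCLike.star_mul_self_of_norm_eq_one ha, powAverage_one hK]

lemma norm_powAverage_star_mul_le (ha : ‖a‖ = 1) (hb : ‖b‖ = 1) (hab : a ≠ b) (K : ℕ) :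
    ‖powAverage K (star a * b)‖ ≤ 2 / (K * ‖a - b‖) := by
  have hunit := RCLike.star_mul_self_of_norm_eq_one ha
  have hshift : star a * b - 1 = star a * (b - a) := by rw [mul_sub, hunit]
  have hdist : ‖star a * b - 1‖ = ‖a - b‖ := by
    rw [hshift, norm_mul, norm_star, ha, one_mul, norm_sub_rev]
  have hne : star a * b ≠ 1 := by
    rw [← sub_ne_zero, ← norm_ne_zero_iff, hdist, norm_ne_zero_iff, sub_ne_zero]
    exact hab
  rw [← hdist]
  exact norm_powAverage_le (by rw [norm_mul, norm_star, ha, hb, one_mul]) hne K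

end PowAverage

section Deviation

variable {ι n 𝕜 : Type*} [Fintype ι] [Fintype n] [DecidableEq n]

lemma average_sub_spectral_limit_eq [DecidableEq ι] [Field 𝕜] [StarRing 𝕜]
    {F : ι → Matrix n n 𝕜} (hF : CompleteOrthogonalIdempotents F) (hherm : ∀ r, (F r)ᴴ = F r)
    (c : ι → 𝕜) (K : ℕ) (j : n) (x : n → 𝕜) :
    (K : 𝕜)⁻¹ * ∑ k ∈ range K,
        star x ⬝ᵥ ((((∑ r, c r • F r) ^ k)ᴴ * single j j 1 * (∑ r, c r • F r) ^ k) *ᵥ x) -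
      ∑ r, star x ⬝ᵥ ((F r * single j j 1 * F r) *ᵥ x) =
    ∑ r, ∑ s, (powAverage K (star (c r) * c s) - if r = s then 1 else 0) *
      (star ((F r *ᵥ x) j) * (F s *ᵥ x) j) := by
  have hdiag (r) : star x ⬝ᵥ ((F r * single j j 1 * F r) *ᵥ x) =
      ∑ s, (if r = s then 1 else 0) * (star ((F r *ᵥ x) j) * (F s *ᵥ x) j) := by
    rw [show F r * single j j 1 * F r = (F r)ᴴ * single j j 1 * F r by rw [hherm],
      star_dotProduct_conjTranspose_mul_single_mul_mulVec]
    simp only [boole_mul, sum_ite_eq, mem_univ, if_true]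
  simp only [star_dotProduct_pow_conjTranspose_mul_single_mul_pow_mulVec hF, hdiag,
    ← sum_sum_powAverage_mul, ← sum_sub_distrib, sub_mul]

lemma norm_sum_sum_mul_star_mul_le [RCLike 𝕜] {a : ι → ι → 𝕜} {w : ι → ι → ℝ} {u : ι → 𝕜}
    (ha : ∀ r s, ‖a r s‖ ≤ w r s) (hu : ∀ r, ‖u r‖ ≤ 1) :
    ‖∑ r, ∑ s, a r s * (star (u r) * u s)‖ ≤ ∑ r, ∑ s, w r s := by
  refine (norm_sum_le _ _).trans (sum_le_sum fun r _ => (norm_sum_le _ _).trans ?_)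
  refine sum_le_sum fun s _ => ?_
  have hu2 : ‖star (u r) * u s‖ ≤ 1 := by
    rw [norm_mul, norm_star]
    exact mul_le_one₀ (hu r) (norm_nonneg _) (hu s)
  rw [norm_mul]
  exact (mul_le_of_le_one_right (norm_nonneg _) hu2).trans (ha r s)

end Deviation

lemma norm_powAverage_star_mul_sub_ite_le {ι 𝕜 : Type*} [DecidableEq ι] [RCLike 𝕜]
    {c : ι → 𝕜} (hinj : Function.Injective c) (hc : ∀ r, ‖c r‖ = 1) {K : ℕ} (hK : K ≠ 0) (r s : ι) :
    ‖powAverage K (star (c r) * c s) - if r = s then 1 else 0‖ ≤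
      2 / K * if r ≠ s then 1 / ‖c r - c s‖ else 0 := by
  rcases eq_or_ne r s with rfl | hrs
  · rw [if_pos rfl, powAverage_star_mul_self hK (hc r)]
    simp
  · rw [if_neg hrs, if_pos hrs, sub_zero, div_mul_div_comm, mul_one]
    exact norm_powAverage_star_mul_le (hc r) (hc s) (hinj.ne hrs) K

theorem mixing_time_bound_general (ℓ m : ℕ)
    (U : Matrix (Fin ℓ) (Fin ℓ) ℂ)
    (lam : Fin m → ℂ) (F : Fin m → Matrix (Fin ℓ) (Fin ℓ) ℂ)
    (hdist : Function.Injective lam)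
    (hmod : ∀ r, ‖lam r‖ = 1)
    (hherm : ∀ r, (F r)ᴴ = F r)
    (horth : ∀ r s, r ≠ s → F r * F s = 0)
    (hsum : ∑ r, F r = 1)
    (hspec : U = ∑ r, lam r • F r)
    (ε : ℝ) (hε : 0 < ε)
    (K : ℕ) (hKpos : 0 < K)
    (hK : (K : ℝ) ≥
      (2 * ℓ / ε) *
        ∑ r, ∑ s, if r ≠ s then 1 / ‖lam r - lam s‖ else 0)
    (x : Fin ℓ → ℂ) (hx : star x ⬝ᵥ x = 1) :
    ∑ j : Fin ℓ,
      ‖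
        ((K : ℂ)⁻¹ *
            ∑ k ∈ Finset.range K,
              star x ⬝ᵥ (((U ^ k)ᴴ * Matrix.single j j 1 * U ^ k) *ᵥ x) -
          ∑ r, star x ⬝ᵥ ((F r * Matrix.single j j 1 * F r) *ᵥ x))‖ ≤ ε := by
  have hF : CompleteOrthogonalIdempotents F :=
    CompleteOrthogonalIdempotents.iff_ortho_complete.2 ⟨horth, hsum⟩
  set S := ∑ r, ∑ s, if r ≠ s then 1 / ‖lam r - lam s‖ else 0
  have hcoord (j : Fin ℓ) (r : Fin m) : ‖(F r *ᵥ x) j‖ ≤ 1 :=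
    IsStarProjection.norm_mulVec_apply_le_one ⟨hF.idem r, hherm r⟩ hx j
  have hterm (j : Fin ℓ) : ‖(K : ℂ)⁻¹ * ∑ k ∈ range K,
      star x ⬝ᵥ (((U ^ k)ᴴ * single j j 1 * U ^ k) *ᵥ x) -
        ∑ r, star x ⬝ᵥ ((F r * single j j 1 * F r) *ᵥ x)‖ ≤ 2 / K * S := by
    rw [hspec, average_sub_spectral_limit_eq hF hherm]
    simp only [S, mul_sum]
    exact norm_sum_sum_mul_star_mul_le
      (norm_powAverage_star_mul_sub_ite_le hdist hmod hKpos.ne') (hcoord j)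
  calc _ ≤ ∑ _j : Fin ℓ, 2 / K * S := sum_le_sum fun j _ => hterm j
    _ = ℓ * (2 / K * S) := by simp
    _ = 2 * ℓ / ε * S * ε / K := by field_simp
    _ ≤ K * ε / K := by gcongr
    _ = ε := by field_simp

/-- For a unitary `U` with spectral decomposition `U = ∑ r, λ r • F r`
and `ε > 0`, every positive integer `K` with `K ≥ (2ℓ/ε) ∑_{r ≠ s} 1/|λ_r − λ_s|`
satisfies: for every unit vector `x`, the total deviation of the `K`-step average
arc probabilities from the limiting probabilities is at most `ε`. -/
theorem mixing_time_bound (ℓ m : ℕ) (hℓ : 0 < ℓ)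
    (U : Matrix (Fin ℓ) (Fin ℓ) ℂ)
    (hU : U ∈ Matrix.unitaryGroup (Fin ℓ) ℂ)
    (lam : Fin m → ℂ) (F : Fin m → Matrix (Fin ℓ) (Fin ℓ) ℂ)
    (hdist : Function.Injective lam)
    (hmod : ∀ r, ‖lam r‖ = 1)
    (hherm : ∀ r, (F r)ᴴ = F r)
    (hidem : ∀ r, F r * F r = F r)
    (horth : ∀ r s, r ≠ s → F r * F s = 0)
    (hsum : ∑ r, F r = 1)
    (hspec : U = ∑ r, lam r • F r)
    (ε : ℝ) (hε : 0 < ε)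
    (K : ℕ) (hKpos : 0 < K)
    (hK : (K : ℝ) ≥
      (2 * ℓ / ε) *
        ∑ r, ∑ s, if r ≠ s then 1 / ‖lam r - lam s‖ else 0)
    (x : Fin ℓ → ℂ) (hx : star x ⬝ᵥ x = 1) :
    ∑ j : Fin ℓ,
      ‖
        ((K : ℂ)⁻¹ *
            ∑ k ∈ Finset.range K,
              star x ⬝ᵥ (((U ^ k)ᴴ * Matrix.single j j 1 * U ^ k) *ᵥ x) -
          ∑ r, star x ⬝ᵥ ((F r * Matrix.single j j 1 * F r) *ᵥ x))‖ ≤ ε :=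
  mixing_time_bound_general ℓ m U lam F hdist hmod hherm horth hsum hspec ε hε K hKpos hK x hx
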